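/- arXiv:2303.06221 — 3 statements merged into one kernel-verified Lean document; each statement's English description precedes it below -/
import Mathlib

section
/- Under the hypotheses of the verification identity for Proposition 1 (S₂ symmetric-valued, S₁, S₀ differentiable satisfying Ṡ₂ = −Q − K₁ᵀRK₁ − S₂A_cl − A_clᵀS₂, Ṡ₁ = Qx_d − K₁ᵀRK₀ − A_clᵀS₁ − S₂BK₀, Ṡ₀ = −x_dᵀQx_d − K₀ᵀRK₀ − 2S₁ᵀBK₀, and x solving ẋ = A_p x + B(K₁x + K₀)), assume additionally the boundary conditions S₂(t₁) = Q_f, S₁(t₁) = −Q_f x_d(t₁), S₀(t₁) = x_d(t₁)ᵀ Q_f x_d(t₁), where Q_f is symmetric positive semidefinite. Then for every t ∈ [t₀,t₁], x(t)ᵀS₂(t)x(t) + 2x(t)ᵀS₁(t) + S₀(t) = (x(t₁)−x_d(t₁))ᵀQ_f(x(t₁)−x_d(t₁)) + ∫_t^{t₁} [(x(τ)−x_d(τ))ᵀQ(x(τ)−x_d(τ)) + u(τ)ᵀRu(τ)] dτ, where u(τ) = K₁(τ)x(τ) + K₀(τ). -/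
open scoped Matrix

attribute [local instance] Matrix.frobeniusSeminormedAddCommGroup
  Matrix.frobeniusNormedAddCommGroup Matrix.frobeniusIsBoundedSMul Matrix.frobeniusNormedSpace

section Helpers

theorem PE_trans_dot {n m : ℕ} (M : Matrix (Fin n) (Fin m) ℝ) (v : Fin n → ℝ) (w : Fin m → ℝ) :
    v ⬝ᵥ M *ᵥ w = w ⬝ᵥ Mᵀ *ᵥ v := by
  rw [Matrix.dotProduct_mulVec, ← Matrix.mulVec_transpose, dotProduct_comm]

theorem PE_dot_shift {n m : ℕ} (M : Matrix (Fin n) (Fin m) ℝ) (v : Fin m → ℝ) (w : Fin n → ℝ) :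
    (M *ᵥ v) ⬝ᵥ w = v ⬝ᵥ Mᵀ *ᵥ w := by
  rw [dotProduct_comm, PE_trans_dot]

theorem PE_key_identity {n_x n_u : ℕ}
    (A_p : Matrix (Fin n_x) (Fin n_x) ℝ) (B : Matrix (Fin n_x) (Fin n_u) ℝ)
    (Q s2 : Matrix (Fin n_x) (Fin n_x) ℝ) (hQsym : Qᵀ = Q) (hs2 : s2ᵀ = s2)
    (R : Matrix (Fin n_u) (Fin n_u) ℝ) (hRsym : Rᵀ = R)
    (a d s1 : Fin n_x → ℝ) (k0 : Fin n_u → ℝ) (k1 : Matrix (Fin n_u) (Fin n_x) ℝ) :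
    (A_p *ᵥ a + B *ᵥ (k1 *ᵥ a + k0)) ⬝ᵥ s2 *ᵥ a
      + a ⬝ᵥ ((-Q - k1ᵀ * R * k1 - s2 * (A_p + B * k1) - (A_p + B * k1)ᵀ * s2) *ᵥ a
          + s2 *ᵥ (A_p *ᵥ a + B *ᵥ (k1 *ᵥ a + k0)))
      + 2 * ((A_p *ᵥ a + B *ᵥ (k1 *ᵥ a + k0)) ⬝ᵥ s1
          + a ⬝ᵥ (Q *ᵥ d - (k1ᵀ * R) *ᵥ k0 - (A_p + B * k1)ᵀ *ᵥ s1 - (s2 * B) *ᵥ k0))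
      + (-(d ⬝ᵥ Q *ᵥ d) - k0 ⬝ᵥ R *ᵥ k0 - 2 * (s1 ⬝ᵥ B *ᵥ k0))
    = -((a - d) ⬝ᵥ Q *ᵥ (a - d) + (k1 *ᵥ a + k0) ⬝ᵥ R *ᵥ (k1 *ᵥ a + k0)) := by
  have hA : a ⬝ᵥ s2 *ᵥ (B *ᵥ k0) = k0 ⬝ᵥ Bᵀ *ᵥ (s2 *ᵥ a) := by
    rw [PE_trans_dot, hs2, PE_dot_shift]
  have hB : k0 ⬝ᵥ R *ᵥ (k1 *ᵥ a) = a ⬝ᵥ k1ᵀ *ᵥ (R *ᵥ k0) := by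
    rw [PE_trans_dot, hRsym, PE_dot_shift]
  have hC : d ⬝ᵥ Q *ᵥ a = a ⬝ᵥ Q *ᵥ d := by rw [PE_trans_dot, hQsym]
  have hD : s1 ⬝ᵥ B *ᵥ k0 = k0 ⬝ᵥ Bᵀ *ᵥ s1 := PE_trans_dot ..
  simp only [Matrix.add_mulVec, Matrix.sub_mulVec, Matrix.neg_mulVec, Matrix.mulVec_add,
    Matrix.mulVec_sub, Matrix.mulVec_neg, dotProduct_add, add_dotProduct,
    dotProduct_sub, sub_dotProduct, dotProduct_neg, neg_dotProduct,
    ← Matrix.mulVec_mulVec, Matrix.transpose_mul, Matrix.transpose_add,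
    Matrix.transpose_transpose, hQsym, hRsym, hs2, PE_dot_shift]
  linarith [hA, hB, hC, hD]

theorem PE_entryDeriv {n m : ℕ} {S : ℝ → Matrix (Fin n) (Fin m) ℝ}
    {S' : Matrix (Fin n) (Fin m) ℝ} {t : ℝ}
    (h : HasDerivAt S S' t) (i : Fin n) (j : Fin m) :
    HasDerivAt (fun t => S t i j) (S' i j) t := by
  have := (LinearMap.toContinuousLinearMap
      (⟨⟨fun M => M i j, fun a b => rfl⟩, fun a b => rfl⟩ :
        Matrix (Fin n) (Fin m) ℝ →ₗ[ℝ] ℝ)).hasFDerivAt.comp_hasDerivAt t h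
  exact this

theorem PE_hasDerivAt_dot {n : ℕ} {f g : ℝ → Fin n → ℝ} {f' g' : Fin n → ℝ} {t : ℝ}
    (hf : HasDerivAt f f' t) (hg : HasDerivAt g g' t) :
    HasDerivAt (fun t => f t ⬝ᵥ g t) (f' ⬝ᵥ g t + f t ⬝ᵥ g') t := by
  have h : ∀ i, HasDerivAt (fun t => f t i * g t i) (f' i * g t i + f t i * g' i) t :=
    fun i => (hasDerivAt_pi.1 hf i).mul (hasDerivAt_pi.1 hg i)
  simpa [dotProduct, Finset.sum_add_distrib] using
    HasDerivAt.fun_sum (fun i (_ : i ∈ Finset.univ) => h i)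

theorem PE_hasDerivAt_mulVec {n m : ℕ} {M : ℝ → Matrix (Fin n) (Fin m) ℝ}
    {M' : Matrix (Fin n) (Fin m) ℝ} {v : ℝ → Fin m → ℝ} {v' : Fin m → ℝ} {t : ℝ}
    (hM : HasDerivAt M M' t) (hv : HasDerivAt v v' t) :
    HasDerivAt (fun t => (M t).mulVec (v t)) (M'.mulVec (v t) + (M t).mulVec v') t := by
  rw [hasDerivAt_pi]
  intro i
  have h : ∀ j, HasDerivAt (fun t => M t i j * v t j) (M' i j * v t j + M t i j * v' j) t :=
    fun j => (PE_entryDeriv hM i j).mul (hasDerivAt_pi.1 hv j)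
  simpa [Matrix.mulVec, dotProduct, Finset.sum_add_distrib] using
    HasDerivAt.fun_sum (fun j (_ : j ∈ Finset.univ) => h j)

theorem PE_contOn_entry {n m : ℕ} {S : ℝ → Matrix (Fin n) (Fin m) ℝ} {s : Set ℝ}
    (h : ContinuousOn S s) (i : Fin n) (j : Fin m) :
    ContinuousOn (fun t => S t i j) s := by
  have hc : Continuous (fun M : Matrix (Fin n) (Fin m) ℝ => M i j) :=
    (LinearMap.toContinuousLinearMap
      (⟨⟨fun M => M i j, fun a b => rfl⟩, fun a b => rfl⟩ :
        Matrix (Fin n) (Fin m) ℝ →ₗ[ℝ] ℝ)).continuous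
  exact hc.comp_continuousOn h

theorem PE_contOn_dot {n : ℕ} {f g : ℝ → Fin n → ℝ} {s : Set ℝ}
    (hf : ContinuousOn f s) (hg : ContinuousOn g s) :
    ContinuousOn (fun t => f t ⬝ᵥ g t) s := by
  simp only [dotProduct]
  exact continuousOn_finset_sum _ fun i _ =>
    ((continuous_apply i).comp_continuousOn hf).mul ((continuous_apply i).comp_continuousOn hg)

theorem PE_contOn_mulVec {n m : ℕ} {M : ℝ → Matrix (Fin n) (Fin m) ℝ} {v : ℝ → Fin m → ℝ}
    {s : Set ℝ} (hM : ContinuousOn M s) (hv : ContinuousOn v s) :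
    ContinuousOn (fun t => (M t).mulVec (v t)) s := by
  rw [continuousOn_pi]
  intro i
  simp only [Matrix.mulVec, dotProduct]
  exact continuousOn_finset_sum _ fun j _ =>
    (PE_contOn_entry hM i j).mul ((continuous_apply j).comp_continuousOn hv)

end Helpers

/-- (Proposition 1)
Under the policy-evaluation differential equations for `S₂, S₁, S₀` with terminal conditions
`S₂(t₁) = Q_f`, `S₁(t₁) = −Q_f x_d(t₁)`, `S₀(t₁) = x_d(t₁)ᵀ Q_f x_d(t₁)`, along any trajectory
of `ẋ = A_p x + B(K₁ x + K₀)`, for every `t ∈ [t₀,t₁]`,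
`xᵀS₂x + 2xᵀS₁ + S₀ = (x(t₁)−x_d(t₁))ᵀQ_f(x(t₁)−x_d(t₁)) + ∫_t^{t₁} [(x−x_d)ᵀQ(x−x_d) + uᵀRu]`,
where `u = K₁ x + K₀`. -/
theorem policy_evaluation_cost_to_go
    {n_x n_u : ℕ} (t₀ t₁ : ℝ) (ht : t₀ < t₁)
    (A_p : Matrix (Fin n_x) (Fin n_x) ℝ) (B : Matrix (Fin n_x) (Fin n_u) ℝ)
    (Q : Matrix (Fin n_x) (Fin n_x) ℝ) (hQsym : Qᵀ = Q) (hQ : Q.PosSemidef)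
    (Q_f : Matrix (Fin n_x) (Fin n_x) ℝ) (hQfsym : Q_fᵀ = Q_f) (hQf : Q_f.PosSemidef)
    (R : Matrix (Fin n_u) (Fin n_u) ℝ) (hRsym : Rᵀ = R) (hR : R.PosDef)
    (x_d : ℝ → Fin n_x → ℝ) (hx_d : ContinuousOn x_d (Set.Icc t₀ t₁))
    (K₁ : ℝ → Matrix (Fin n_u) (Fin n_x) ℝ) (hK₁ : ContinuousOn K₁ (Set.Icc t₀ t₁))
    (K₀ : ℝ → Fin n_u → ℝ) (hK₀ : ContinuousOn K₀ (Set.Icc t₀ t₁))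
    (A_cl : ℝ → Matrix (Fin n_x) (Fin n_x) ℝ) (hA_cl : ∀ τ, A_cl τ = A_p + B * K₁ τ)
    (S₂ : ℝ → Matrix (Fin n_x) (Fin n_x) ℝ) (hS₂sym : ∀ τ, (S₂ τ)ᵀ = S₂ τ)
    (S₁ : ℝ → Fin n_x → ℝ) (S₀ : ℝ → ℝ)
    (hS₂ : ∀ τ ∈ Set.Icc t₀ t₁, HasDerivAt S₂
      (-Q - (K₁ τ)ᵀ * R * K₁ τ - S₂ τ * A_cl τ - (A_cl τ)ᵀ * S₂ τ) τ)
    (hS₁ : ∀ τ ∈ Set.Icc t₀ t₁, HasDerivAt S₁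
      (Q.mulVec (x_d τ) - ((K₁ τ)ᵀ * R).mulVec (K₀ τ) - (A_cl τ)ᵀ.mulVec (S₁ τ)
        - (S₂ τ * B).mulVec (K₀ τ)) τ)
    (hS₀ : ∀ τ ∈ Set.Icc t₀ t₁, HasDerivAt S₀
      (-(x_d τ ⬝ᵥ Q.mulVec (x_d τ)) - K₀ τ ⬝ᵥ R.mulVec (K₀ τ)
        - 2 * (S₁ τ ⬝ᵥ B.mulVec (K₀ τ))) τ)
    (hS₂T : S₂ t₁ = Q_f) (hS₁T : S₁ t₁ = -Q_f.mulVec (x_d t₁))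
    (hS₀T : S₀ t₁ = x_d t₁ ⬝ᵥ Q_f.mulVec (x_d t₁))
    (x : ℝ → Fin n_x → ℝ)
    (hx : ∀ τ ∈ Set.Icc t₀ t₁, HasDerivAt x
      (A_p.mulVec (x τ) + B.mulVec ((K₁ τ).mulVec (x τ) + K₀ τ)) τ)
    (u : ℝ → Fin n_u → ℝ) (hu : ∀ τ, u τ = (K₁ τ).mulVec (x τ) + K₀ τ) :
    ∀ t ∈ Set.Icc t₀ t₁,
      x t ⬝ᵥ (S₂ t).mulVec (x t) + 2 * (x t ⬝ᵥ S₁ t) + S₀ t =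
        (x t₁ - x_d t₁) ⬝ᵥ Q_f.mulVec (x t₁ - x_d t₁) +
          ∫ τ in t..t₁,
            ((x τ - x_d τ) ⬝ᵥ Q.mulVec (x τ - x_d τ) + u τ ⬝ᵥ R.mulVec (u τ)) := by
  intro t htmem
  obtain ⟨ht₀, ht₁⟩ := htmem
  set V : ℝ → ℝ := fun τ => x τ ⬝ᵥ (S₂ τ).mulVec (x τ) + 2 * (x τ ⬝ᵥ S₁ τ) + S₀ τ with hVdef
  set F : ℝ → ℝ := fun τ =>
    (x τ - x_d τ) ⬝ᵥ Q.mulVec (x τ - x_d τ) + u τ ⬝ᵥ R.mulVec (u τ) with hFdef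
  -- derivative of V
  have hV : ∀ τ ∈ Set.Icc t₀ t₁, HasDerivAt V (-(F τ)) τ := by
    intro τ hτ
    have hd1 := PE_hasDerivAt_dot (hx τ hτ) (PE_hasDerivAt_mulVec (hS₂ τ hτ) (hx τ hτ))
    have hd2 := PE_hasDerivAt_dot (hx τ hτ) (hS₁ τ hτ)
    have hd := (hd1.add (hd2.const_mul 2)).add (hS₀ τ hτ)
    have hkey := PE_key_identity A_p B Q (S₂ τ) hQsym (hS₂sym τ) R hRsym
      (x τ) (x_d τ) (S₁ τ) (K₀ τ) (K₁ τ)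
    rw [hA_cl] at hd
    rw [hFdef]
    simp only [hu]
    exact hd.congr_deriv hkey
  -- continuity of x on [t₀,t₁]
  have hxc : ContinuousOn x (Set.Icc t₀ t₁) :=
    fun τ hτ => (hx τ hτ).continuousAt.continuousWithinAt
  -- continuity of F
  have hFc : ContinuousOn F (Set.Icc t₀ t₁) := by
    have hxd : ContinuousOn (fun τ => x τ - x_d τ) (Set.Icc t₀ t₁) := hxc.sub hx_d
    have huc : ContinuousOn u (Set.Icc t₀ t₁) := by
      have : ContinuousOn (fun τ => (K₁ τ).mulVec (x τ) + K₀ τ) (Set.Icc t₀ t₁) :=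
        (PE_contOn_mulVec hK₁ hxc).add hK₀
      exact this.congr fun τ _ => hu τ
    exact (PE_contOn_dot hxd (PE_contOn_mulVec continuousOn_const hxd)).add
      (PE_contOn_dot huc (PE_contOn_mulVec continuousOn_const huc))
  have hsub : Set.uIcc t t₁ ⊆ Set.Icc t₀ t₁ := by
    rw [Set.uIcc_of_le ht₁]
    exact Set.Icc_subset_Icc ht₀ le_rfl
  have hint : IntervalIntegrable (fun τ => -(F τ)) MeasureTheory.volume t t₁ :=
    ((hFc.neg).mono hsub).intervalIntegrable
  have hftc : (∫ τ in t..t₁, -(F τ)) = V t₁ - V t :=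
    intervalIntegral.integral_eq_sub_of_hasDerivAt (fun τ hτ => hV τ (hsub hτ)) hint
  rw [intervalIntegral.integral_neg] at hftc
  -- terminal value of V
  have hVT : V t₁ = (x t₁ - x_d t₁) ⬝ᵥ Q_f.mulVec (x t₁ - x_d t₁) := by
    have hC : x_d t₁ ⬝ᵥ Q_f *ᵥ x t₁ = x t₁ ⬝ᵥ Q_f *ᵥ x_d t₁ := by
      rw [PE_trans_dot, hQfsym]
    simp only [hVdef, hS₂T, hS₁T, hS₀T, Matrix.mulVec_sub, Matrix.sub_mulVec,
      dotProduct_sub, sub_dotProduct, dotProduct_neg, Matrix.mulVec_neg,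
      neg_dotProduct]
    linarith [hC]
  have hgoal : V t = V t₁ + ∫ τ in t..t₁, F τ := by linarith [hftc]
  rw [hVT] at hgoal
  simpa [hVdef, hFdef] using hgoal
end

section
/- Fix t₀ < t₁, matrices A_p, B (:= B_pΛ), symmetric positive semidefinite Q and Q_f, symmetric positive definite R, a continuous bounded signal x_d on [t₀,t₁], and constants M > 0, ρ > 0. For a continuous linear feedback law π with gains K₁^π : [t₀,t₁] → ℝ^{n_u×n_x}, K₀^π : [t₀,t₁] → ℝ^{n_u} satisfying sup_τ ‖K₁^π(τ)‖ ≤ M and sup_τ ‖K₀^π(τ)‖ ≤ M, let V^π(x,τ) = xᵀS₂^π(τ)x + 2xᵀS₁^π(τ) + S₀^π(τ) be its cost-to-go, where S₂^π, S₁^π, S₀^π solve Ṡ₂ = −Q − K₁ᵀRK₁ − S₂(A_p+BK₁) − (A_p+BK₁)ᵀS₂, Ṡ₁ = Qx_d − K₁ᵀRK₀ − (A_p+BK₁)ᵀS₁ − S₂BK₀, Ṡ₀ = −x_dᵀQx_d − K₀ᵀRK₀ − 2S₁ᵀBK₀ with terminal conditions S₂(t₁)=Q_f, S₁(t₁)=−Q_f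 x_d(t₁), S₀(t₁)=x_d(t₁)ᵀQ_f x_d(t₁). Then there exists a constant C ≥ 0, depending only on A_p, B, Q, R, Q_f, sup‖x_d‖, t₁−t₀, M and ρ, such that for any two such feedback laws π₁, π₂ with max{sup_τ‖K₁^{π₁}(τ)−K₁^{π₂}(τ)‖, sup_τ‖K₀^{π₁}(τ)−K₀^{π₂}(τ)‖} ≤ δ, one has |V^{π₁}(x,τ) − V^{π₂}(x,τ)| ≤ C·δ for all τ ∈ [t₀,t₁] and all x with ‖x‖ ≤ ρ. -/
open scoped Matrix

attribute [local instance] Matrix.frobeniusSeminormedAddCommGroup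
  Matrix.frobeniusNormedAddCommGroup Matrix.frobeniusIsBoundedSMul Matrix.frobeniusNormedSpace

section Aux

open Set

lemma entry_abs_le_frobenius {p q : ℕ} (A : Matrix (Fin p) (Fin q) ℝ) (i : Fin p) (j : Fin q) :
    |A i j| ≤ ‖A‖ := by
  rw [Matrix.frobenius_norm_def]
  have h1 : (‖A i j‖ ^ (2:ℝ)) ≤ ∑ i', ∑ j', ‖A i' j'‖ ^ (2:ℝ) := by
    calc ‖A i j‖ ^ (2:ℝ) ≤ ∑ j', ‖A i j'‖ ^ (2:ℝ) :=
          Finset.single_le_sum (f := fun j' => ‖A i j'‖ ^ (2:ℝ)) (fun j' _ => by positivity)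
            (Finset.mem_univ j)
      _ ≤ ∑ i', ∑ j', ‖A i' j'‖ ^ (2:ℝ) :=
          Finset.single_le_sum (f := fun i' => ∑ j', ‖A i' j'‖ ^ (2:ℝ))
            (fun i' _ => Finset.sum_nonneg fun j' _ => by positivity) (Finset.mem_univ i)
  have h2 : |A i j| = (‖A i j‖ ^ (2:ℝ)) ^ (1/2 : ℝ) := by
    rw [Real.rpow_two, Real.norm_eq_abs, ← Real.sqrt_eq_rpow, Real.sqrt_sq_eq_abs, abs_abs]
  rw [h2]
  exact Real.rpow_le_rpow (by positivity) h1 (by norm_num)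

lemma norm_mulVec_le' {p q : ℕ} (A : Matrix (Fin p) (Fin q) ℝ) (v : Fin q → ℝ) :
    ‖A.mulVec v‖ ≤ (q : ℝ) * ‖A‖ * ‖v‖ := by
  rw [pi_norm_le_iff_of_nonneg (by positivity)]
  intro i
  calc ‖A.mulVec v i‖ = |∑ j, A i j * v j| := rfl
    _ ≤ ∑ j, |A i j * v j| := Finset.abs_sum_le_sum_abs _ _
    _ ≤ ∑ _j : Fin q, ‖A‖ * ‖v‖ := by
        refine Finset.sum_le_sum fun j _ => ?_
        rw [abs_mul]
        exact mul_le_mul (entry_abs_le_frobenius A i j) (norm_le_pi_norm v j) (abs_nonneg _)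
          (norm_nonneg _)
    _ = (q : ℝ) * ‖A‖ * ‖v‖ := by simp [Finset.sum_const, mul_assoc]

lemma abs_dotProduct_le' {p : ℕ} (u v : Fin p → ℝ) :
    |u ⬝ᵥ v| ≤ (p : ℝ) * ‖u‖ * ‖v‖ := by
  calc |u ⬝ᵥ v| ≤ ∑ j, |u j * v j| := Finset.abs_sum_le_sum_abs _ _
    _ ≤ ∑ _j : Fin p, ‖u‖ * ‖v‖ := by
        refine Finset.sum_le_sum fun j _ => ?_
        rw [abs_mul]
        exact mul_le_mul (norm_le_pi_norm u j) (norm_le_pi_norm v j) (abs_nonneg _)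
          (norm_nonneg _)
    _ = (p : ℝ) * ‖u‖ * ‖v‖ := by simp [Finset.sum_const, mul_assoc]

lemma gronwallBound_mono_x {δ K ε : ℝ} (hδ : 0 ≤ δ) (hK : 0 ≤ K) (hε : 0 ≤ ε)
    {x y : ℝ} (hxy : x ≤ y) : gronwallBound δ K ε x ≤ gronwallBound δ K ε y := by
  rcases eq_or_ne K 0 with h | h
  · subst h; rw [gronwallBound_K0]; dsimp only; nlinarith
  · have hK' : 0 < K := lt_of_le_of_ne hK (Ne.symm h)
    rw [gronwallBound_of_K_ne_0 h]
    dsimp only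
    have he : Real.exp (K * x) ≤ Real.exp (K * y) := Real.exp_le_exp.2 (by nlinarith)
    have : 0 ≤ ε / K := by positivity
    nlinarith [Real.exp_pos (K*x)]

lemma gronwallBound_nonneg' {δ K ε x : ℝ} (hδ : 0 ≤ δ) (hK : 0 ≤ K) (hε : 0 ≤ ε)
    (hx : 0 ≤ x) : 0 ≤ gronwallBound δ K ε x := by
  have := gronwallBound_mono_x hδ hK hε hx
  rw [gronwallBound_x0] at this
  linarith

lemma gronwallBound_zero_smul (K c d x : ℝ) :
    gronwallBound 0 K (c * d) x = d * gronwallBound 0 K c x := by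
  rcases eq_or_ne K 0 with h | h
  · subst h; rw [gronwallBound_K0, gronwallBound_K0]; ring
  · rw [gronwallBound_of_K_ne_0 h, gronwallBound_of_K_ne_0 h]; dsimp only; ring

lemma gronwall_backward {E : Type*} [NormedAddCommGroup E] [NormedSpace ℝ E]
    {f f' : ℝ → E} {t₀ t₁ K ε δ : ℝ} (hle : t₀ ≤ t₁)
    (hd : ∀ τ ∈ Icc t₀ t₁, HasDerivAt f (f' τ) τ)
    (hend : ‖f t₁‖ ≤ δ)
    (hb : ∀ τ ∈ Icc t₀ t₁, ‖f' τ‖ ≤ K * ‖f τ‖ + ε)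
    (hδ : 0 ≤ δ) (hK : 0 ≤ K) (hε : 0 ≤ ε) :
    ∀ τ ∈ Icc t₀ t₁, ‖f τ‖ ≤ gronwallBound δ K ε (t₁ - t₀) := by
  have hmem : ∀ t ∈ Icc t₀ t₁, t₀ + t₁ - t ∈ Icc t₀ t₁ := by
    intro t ht; exact ⟨by linarith [ht.2], by linarith [ht.1]⟩
  set g : ℝ → E := fun t => f (t₀ + t₁ - t) with hg
  have hg' : ∀ t ∈ Icc t₀ t₁, HasDerivAt g (-(f' (t₀ + t₁ - t))) t := by
    intro t ht
    have hc : HasDerivAt (fun t : ℝ => t₀ + t₁ - t) (-1 : ℝ) t := by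
      exact (hasDerivAt_id' t).const_sub (t₀ + t₁)
    have := HasDerivAt.scomp t (hd _ (hmem t ht)) hc
    rw [neg_one_smul] at this; exact this
  have key := norm_le_gronwallBound_of_norm_deriv_right_le
    (f := g) (f' := fun t => -(f' (t₀ + t₁ - t))) (a := t₀) (b := t₁) (δ := δ) (K := K) (ε := ε)
    (fun t ht => ((hg' t ht).continuousAt).continuousWithinAt)
    (fun t ht => ((hg' t (Ico_subset_Icc_self ht)).hasDerivWithinAt))
    (by simpa [hg] using hend)
    (fun t ht => by
      simpa [hg] using hb _ (hmem t (Ico_subset_Icc_self ht)))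
  intro τ hτ
  have h1 := key (t₀ + t₁ - τ) (hmem τ hτ)
  have h2 : g (t₀ + t₁ - τ) = f τ := by simp [hg]
  rw [h2] at h1
  refine h1.trans (gronwallBound_mono_x hδ hK hε (by linarith [hτ.1]))

lemma norm_sub3_le {E : Type*} [SeminormedAddCommGroup E] (a b c d : E) :
    ‖a - b - c - d‖ ≤ ‖a‖ + ‖b‖ + ‖c‖ + ‖d‖ := by
  have h1 := norm_sub_le (a - b - c) d
  have h2 := norm_sub_le (a - b) c
  have h3 := norm_sub_le a b
  linarith

lemma norm_neg_sub_sub {E : Type*} [SeminormedAddCommGroup E] (a b c d e f : E) :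
    ‖-(a + b) - (c + d) - (e + f)‖ ≤ ‖a‖ + ‖b‖ + ‖c‖ + ‖d‖ + ‖e‖ + ‖f‖ := by
  have h1 := norm_sub_le (-(a + b) - (c + d)) (e + f)
  have h2 := norm_sub_le (-(a + b)) (c + d)
  have h3 : ‖-(a + b)‖ = ‖a + b‖ := norm_neg _
  have h4 := norm_add_le a b
  have h5 := norm_add_le c d
  have h6 := norm_add_le e f
  linarith

lemma mul_le_mul3 {a b c a' b' c' : ℝ} (ha : a ≤ a') (hb : b ≤ b') (hc : c ≤ c')
    (hb0 : 0 ≤ b) (hc0 : 0 ≤ c) (ha'0 : 0 ≤ a') (hb'0 : 0 ≤ b') :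
    a * b * c ≤ a' * b' * c' :=
  mul_le_mul (mul_le_mul ha hb hb0 ha'0) hc hc0 (mul_nonneg ha'0 hb'0)

lemma diff2_eq' {nx nu : ℕ} (A : Matrix (Fin nx) (Fin nx) ℝ) (B : Matrix (Fin nx) (Fin nu) ℝ)
    (Q : Matrix (Fin nx) (Fin nx) ℝ) (R : Matrix (Fin nu) (Fin nu) ℝ)
    (Ka Kb : Matrix (Fin nu) (Fin nx) ℝ) (Pa Pb : Matrix (Fin nx) (Fin nx) ℝ) :
    (-Q - Kaᵀ * R * Ka - Pa * (A + B * Ka) - (A + B * Ka)ᵀ * Pa)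
      - (-Q - Kbᵀ * R * Kb - Pb * (A + B * Kb) - (A + B * Kb)ᵀ * Pb)
    = -((Ka - Kb)ᵀ * R * Ka + Kbᵀ * R * (Ka - Kb))
      - ((Pa - Pb) * (A + B * Ka) + Pb * (B * (Ka - Kb)))
      - ((B * (Ka - Kb))ᵀ * Pa + (A + B * Kb)ᵀ * (Pa - Pb)) := by
  simp only [Matrix.transpose_sub, Matrix.transpose_add, Matrix.transpose_mul,
    Matrix.sub_mul, Matrix.mul_sub, Matrix.add_mul, Matrix.mul_add]
  abel

lemma diff1_eq' {nx nu : ℕ} (A : Matrix (Fin nx) (Fin nx) ℝ) (B : Matrix (Fin nx) (Fin nu) ℝ)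
    (Q : Matrix (Fin nx) (Fin nx) ℝ) (R : Matrix (Fin nu) (Fin nu) ℝ) (xd : Fin nx → ℝ)
    (Ka Kb : Matrix (Fin nu) (Fin nx) ℝ) (Pa Pb : Matrix (Fin nx) (Fin nx) ℝ)
    (qa qb : Fin nx → ℝ) (ka kb : Fin nu → ℝ) :
    (Q.mulVec xd - (Kaᵀ * R).mulVec ka - (A + B * Ka)ᵀ.mulVec qa - (Pa * B).mulVec ka)
      - (Q.mulVec xd - (Kbᵀ * R).mulVec kb - (A + B * Kb)ᵀ.mulVec qb - (Pb * B).mulVec kb)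
    = -(((Ka - Kb)ᵀ * R).mulVec ka + (Kbᵀ * R).mulVec (ka - kb))
      - ((B * (Ka - Kb))ᵀ.mulVec qa + (A + B * Kb)ᵀ.mulVec (qa - qb))
      - (((Pa - Pb) * B).mulVec ka + (Pb * B).mulVec (ka - kb)) := by
  simp only [Matrix.transpose_sub, Matrix.transpose_add, Matrix.transpose_mul,
    Matrix.sub_mul, Matrix.sub_mulVec, Matrix.mulVec_sub, Matrix.add_mulVec]
  abel

lemma diff0_eq' {nx nu : ℕ} (B : Matrix (Fin nx) (Fin nu) ℝ) (R : Matrix (Fin nu) (Fin nu) ℝ)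
    (c : ℝ) (qa qb : Fin nx → ℝ) (ka kb : Fin nu → ℝ) :
    (-c - ka ⬝ᵥ R.mulVec ka - 2 * (qa ⬝ᵥ B.mulVec ka))
      - (-c - kb ⬝ᵥ R.mulVec kb - 2 * (qb ⬝ᵥ B.mulVec kb))
    = -((ka - kb) ⬝ᵥ R.mulVec ka + kb ⬝ᵥ R.mulVec (ka - kb))
      - 2 * ((qa - qb) ⬝ᵥ B.mulVec ka + qb ⬝ᵥ B.mulVec (ka - kb)) := by
  simp only [sub_dotProduct, dotProduct_sub, Matrix.mulVec_sub]
  ring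

lemma abs_comb_le (s1 s2 s3 s4 : ℝ) :
    |-(s1 + s2) - 2 * (s3 + s4)| ≤ |s1| + |s2| + 2 * |s3| + 2 * |s4| := by
  have h1 := abs_add_le s1 s2
  have h2 := abs_add_le s3 s4
  have h3 : |-(s1 + s2) - 2 * (s3 + s4)| ≤ |s1 + s2| + 2 * |s3 + s4| := by
    rw [show (-(s1 + s2) - 2 * (s3 + s4)) = -((s1 + s2) + 2 * (s3 + s4)) by ring, abs_neg]
    calc |(s1 + s2) + 2 * (s3 + s4)| ≤ |s1 + s2| + |2 * (s3 + s4)| := abs_add_le _ _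
      _ = |s1 + s2| + 2 * |s3 + s4| := by rw [abs_mul]; norm_num
  linarith

end Aux

set_option maxHeartbeats 2000000 in
/-- (quantitative version of Proposition 2)
On bounded sets of feedback gains, the cost-to-go of the linear quadratic tracking problem,
defined through the policy-evaluation differential equations with their terminal conditions,
is Lipschitz in the feedback gains: there is a constant `C ≥ 0` (depending only on the fixed
problem data, the gain bound `M` and the state bound `ρ`) such that if two continuous feedback
laws have gains uniformly `δ`-close, the corresponding cost-to-go functions differ by at most
`C·δ` on `[t₀,t₁] × {‖x‖ ≤ ρ}`. -/
theorem cost_to_go_lipschitz_in_gains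
    {n_x n_u : ℕ} (t₀ t₁ : ℝ) (ht : t₀ < t₁)
    (A_p : Matrix (Fin n_x) (Fin n_x) ℝ) (B : Matrix (Fin n_x) (Fin n_u) ℝ)
    (Q : Matrix (Fin n_x) (Fin n_x) ℝ) (hQsym : Qᵀ = Q) (hQ : Q.PosSemidef)
    (Q_f : Matrix (Fin n_x) (Fin n_x) ℝ) (hQfsym : Q_fᵀ = Q_f) (hQf : Q_f.PosSemidef)
    (R : Matrix (Fin n_u) (Fin n_u) ℝ) (hRsym : Rᵀ = R) (hR : R.PosDef)
    (x_d : ℝ → Fin n_x → ℝ) (hx_d : ContinuousOn x_d (Set.Icc t₀ t₁))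
    (x_d_bound : ℝ) (hx_d_bound : ∀ τ ∈ Set.Icc t₀ t₁, ‖x_d τ‖ ≤ x_d_bound)
    (M : ℝ) (hM : 0 < M) (ρ : ℝ) (hρ : 0 < ρ) :
    ∃ C : ℝ, 0 ≤ C ∧
      ∀ (K₁ : Fin 2 → ℝ → Matrix (Fin n_u) (Fin n_x) ℝ)
        (K₀ : Fin 2 → ℝ → Fin n_u → ℝ)
        (S₂ : Fin 2 → ℝ → Matrix (Fin n_x) (Fin n_x) ℝ)
        (S₁ : Fin 2 → ℝ → Fin n_x → ℝ) (S₀ : Fin 2 → ℝ → ℝ),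
        (∀ i, ContinuousOn (K₁ i) (Set.Icc t₀ t₁)) →
        (∀ i, ContinuousOn (K₀ i) (Set.Icc t₀ t₁)) →
        (∀ i, ∀ τ ∈ Set.Icc t₀ t₁, ‖K₁ i τ‖ ≤ M) →
        (∀ i, ∀ τ ∈ Set.Icc t₀ t₁, ‖K₀ i τ‖ ≤ M) →
        (∀ i, ∀ τ ∈ Set.Icc t₀ t₁, HasDerivAt (S₂ i)
          (-Q - (K₁ i τ)ᵀ * R * K₁ i τ - S₂ i τ * (A_p + B * K₁ i τ)
            - (A_p + B * K₁ i τ)ᵀ * S₂ i τ) τ) →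
        (∀ i, ∀ τ ∈ Set.Icc t₀ t₁, HasDerivAt (S₁ i)
          (Q.mulVec (x_d τ) - ((K₁ i τ)ᵀ * R).mulVec (K₀ i τ)
            - (A_p + B * K₁ i τ)ᵀ.mulVec (S₁ i τ) - (S₂ i τ * B).mulVec (K₀ i τ)) τ) →
        (∀ i, ∀ τ ∈ Set.Icc t₀ t₁, HasDerivAt (S₀ i)
          (-(x_d τ ⬝ᵥ Q.mulVec (x_d τ)) - K₀ i τ ⬝ᵥ R.mulVec (K₀ i τ)
            - 2 * (S₁ i τ ⬝ᵥ B.mulVec (K₀ i τ))) τ) →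
        (∀ i, S₂ i t₁ = Q_f) →
        (∀ i, S₁ i t₁ = -Q_f.mulVec (x_d t₁)) →
        (∀ i, S₀ i t₁ = x_d t₁ ⬝ᵥ Q_f.mulVec (x_d t₁)) →
        ∀ δ : ℝ,
          (∀ τ ∈ Set.Icc t₀ t₁, ‖K₁ 0 τ - K₁ 1 τ‖ ≤ δ) →
          (∀ τ ∈ Set.Icc t₀ t₁, ‖K₀ 0 τ - K₀ 1 τ‖ ≤ δ) →
          ∀ τ ∈ Set.Icc t₀ t₁, ∀ x : Fin n_x → ℝ, ‖x‖ ≤ ρ →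
            |(x ⬝ᵥ (S₂ 0 τ).mulVec x + 2 * (x ⬝ᵥ S₁ 0 τ) + S₀ 0 τ)
              - (x ⬝ᵥ (S₂ 1 τ).mulVec x + 2 * (x ⬝ᵥ S₁ 1 τ) + S₀ 1 τ)| ≤ C * δ := by
  have hT : (0:ℝ) ≤ t₁ - t₀ := by linarith
  have hxb : (0:ℝ) ≤ x_d_bound :=
    le_trans (norm_nonneg _) (hx_d_bound t₀ (Set.left_mem_Icc.2 ht.le))
  set L : ℝ := ‖A_p‖ + ‖B‖ * M with hLdef
  have hL0 : (0:ℝ) ≤ L := by rw [hLdef]; positivity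
  set C₂ : ℝ := gronwallBound ‖Q_f‖ (2*L) (‖Q‖ + ‖R‖*M^2) (t₁ - t₀) with hC₂def
  have hC₂0 : (0:ℝ) ≤ C₂ :=
    gronwallBound_nonneg' (norm_nonneg _) (by linarith) (by positivity) hT
  set ε₁ : ℝ := (n_x:ℝ)*‖Q‖*x_d_bound + (n_u:ℝ)*(M*‖R‖)*M + (n_u:ℝ)*(C₂*‖B‖)*M with hε₁def
  have hε₁0 : (0:ℝ) ≤ ε₁ := by
    have h1 : (0:ℝ) ≤ (n_x:ℝ)*‖Q‖*x_d_bound := mul_nonneg (by positivity) hxb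
    have h2 : (0:ℝ) ≤ (n_u:ℝ)*(M*‖R‖)*M := by positivity
    have h3 : (0:ℝ) ≤ (n_u:ℝ)*(C₂*‖B‖)*M :=
      mul_nonneg (mul_nonneg (by positivity) (mul_nonneg hC₂0 (norm_nonneg _))) hM.le
    rw [hε₁def]; linarith
  set C₁ : ℝ := gronwallBound ((n_x:ℝ)*‖Q_f‖*x_d_bound) ((n_x:ℝ)*L) ε₁ (t₁-t₀) with hC₁def
  have hC₁0 : (0:ℝ) ≤ C₁ :=
    gronwallBound_nonneg' (mul_nonneg (by positivity) hxb) (by positivity) hε₁0 hT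
  set e₂ : ℝ := 2*M*‖R‖ + 2*C₂*‖B‖ with he₂def
  have he₂0 : (0:ℝ) ≤ e₂ := by
    have : (0:ℝ) ≤ 2*C₂*‖B‖ := mul_nonneg (by linarith) (norm_nonneg _)
    rw [he₂def]; positivity
  set D₂ : ℝ := gronwallBound 0 (2*L) e₂ (t₁-t₀) with hD₂def
  have hD₂0 : (0:ℝ) ≤ D₂ := gronwallBound_nonneg' le_rfl (by linarith) he₂0 hT
  set e₁ : ℝ := 2*(n_u:ℝ)*M*‖R‖ + (n_x:ℝ)*‖B‖*C₁ + (n_u:ℝ)*‖B‖*(M*D₂ + C₂) with he₁def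
  have he₁0 : (0:ℝ) ≤ e₁ := by
    have h1 : (0:ℝ) ≤ 2*(n_u:ℝ)*M*‖R‖ := by positivity
    have h2 : (0:ℝ) ≤ (n_x:ℝ)*‖B‖*C₁ := mul_nonneg (by positivity) hC₁0
    have h3 : (0:ℝ) ≤ (n_u:ℝ)*‖B‖*(M*D₂ + C₂) :=
      mul_nonneg (by positivity) (by nlinarith)
    rw [he₁def]; linarith
  set D₁ : ℝ := gronwallBound 0 ((n_x:ℝ)*L) e₁ (t₁-t₀) with hD₁def
  have hD₁0 : (0:ℝ) ≤ D₁ := gronwallBound_nonneg' le_rfl (by positivity) he₁0 hT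
  set e₀ : ℝ := 2*(n_u:ℝ)^2*‖R‖*M + 2*(n_x:ℝ)*(n_u:ℝ)*‖B‖*(D₁*M + C₁) with he₀def
  have he₀0 : (0:ℝ) ≤ e₀ := by
    have h1 : (0:ℝ) ≤ 2*(n_u:ℝ)^2*‖R‖*M := by positivity
    have h2 : (0:ℝ) ≤ 2*(n_x:ℝ)*(n_u:ℝ)*‖B‖*(D₁*M + C₁) :=
      mul_nonneg (by positivity) (by nlinarith)
    rw [he₀def]; linarith
  refine ⟨(n_x:ℝ)^2*ρ^2*D₂ + 2*(n_x:ℝ)*ρ*D₁ + e₀*(t₁-t₀), ?_, ?_⟩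
  · have h1 : (0:ℝ) ≤ (n_x:ℝ)^2*ρ^2*D₂ := mul_nonneg (by positivity) hD₂0
    have h2 : (0:ℝ) ≤ 2*(n_x:ℝ)*ρ*D₁ := mul_nonneg (by positivity) hD₁0
    have h3 : (0:ℝ) ≤ e₀*(t₁-t₀) := mul_nonneg he₀0 hT
    linarith
  intro K₁ K₀ S₂ S₁ S₀ hK₁c hK₀c hK₁M hK₀M hdS₂ hdS₁ hdS₀ hS₂t hS₁t hS₀t δ hδ₁ hδ₀
  have hδ0 : (0:ℝ) ≤ δ := le_trans (norm_nonneg _) (hδ₁ t₀ (Set.left_mem_Icc.2 ht.le))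
  -- bound on the closed-loop matrix
  have hAK : ∀ i, ∀ σ ∈ Set.Icc t₀ t₁, ‖A_p + B * K₁ i σ‖ ≤ L := by
    intro i σ hσ
    have h1 := norm_add_le A_p (B * K₁ i σ)
    have h2 := Matrix.frobenius_norm_mul B (K₁ i σ)
    have h3 := hK₁M i σ hσ
    have h4 : ‖B‖ * ‖K₁ i σ‖ ≤ ‖B‖ * M := mul_le_mul_of_nonneg_left h3 (norm_nonneg _)
    rw [hLdef]; linarith
  have hAKT : ∀ i, ∀ σ ∈ Set.Icc t₀ t₁, ‖(A_p + B * K₁ i σ)ᵀ‖ ≤ L := by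
    intro i σ hσ
    rw [Matrix.frobenius_norm_transpose]; exact hAK i σ hσ
  -- a priori bound on S₂
  have hS₂b : ∀ i, ∀ σ ∈ Set.Icc t₀ t₁, ‖S₂ i σ‖ ≤ C₂ := by
    intro i
    refine gronwall_backward (f := S₂ i) (δ := ‖Q_f‖) (K := 2*L) (ε := ‖Q‖ + ‖R‖*M^2)
      (f' := fun σ => -Q - (K₁ i σ)ᵀ * R * K₁ i σ - S₂ i σ * (A_p + B * K₁ i σ)
        - (A_p + B * K₁ i σ)ᵀ * S₂ i σ)
      ht.le (hdS₂ i) (by rw [hS₂t i]) ?_ (norm_nonneg _) (by linarith) (by positivity)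
    intro σ hσ
    have h0 := norm_sub3_le (-Q) ((K₁ i σ)ᵀ * R * K₁ i σ) (S₂ i σ * (A_p + B * K₁ i σ))
      ((A_p + B * K₁ i σ)ᵀ * S₂ i σ)
    rw [norm_neg] at h0
    have h1 : ‖(K₁ i σ)ᵀ * R * K₁ i σ‖ ≤ M * ‖R‖ * M := by
      have h := Matrix.frobenius_norm_mul ((K₁ i σ)ᵀ * R) (K₁ i σ)
      have h' := Matrix.frobenius_norm_mul (K₁ i σ)ᵀ R
      rw [Matrix.frobenius_norm_transpose] at h'
      have hK := hK₁M i σ hσ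
      have hKR : ‖(K₁ i σ)ᵀ * R‖ ≤ M * ‖R‖ :=
        h'.trans (mul_le_mul_of_nonneg_right hK (norm_nonneg R))
      exact h.trans (mul_le_mul hKR hK (norm_nonneg _) (by positivity))
    have h2 : ‖S₂ i σ * (A_p + B * K₁ i σ)‖ ≤ ‖S₂ i σ‖ * L :=
      (Matrix.frobenius_norm_mul _ _).trans
        (mul_le_mul_of_nonneg_left (hAK i σ hσ) (norm_nonneg _))
    have h3 : ‖(A_p + B * K₁ i σ)ᵀ * S₂ i σ‖ ≤ L * ‖S₂ i σ‖ :=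
      (Matrix.frobenius_norm_mul _ _).trans
        (mul_le_mul_of_nonneg_right (hAKT i σ hσ) (norm_nonneg _))
    nlinarith [h0, h1, h2, h3]
  -- a priori bound on S₁
  have hS₁b : ∀ i, ∀ σ ∈ Set.Icc t₀ t₁, ‖S₁ i σ‖ ≤ C₁ := by
    intro i
    refine gronwall_backward (f := S₁ i) (δ := (n_x:ℝ)*‖Q_f‖*x_d_bound)
      (K := (n_x:ℝ)*L) (ε := ε₁)
      (f' := fun σ => Q.mulVec (x_d σ) - ((K₁ i σ)ᵀ * R).mulVec (K₀ i σ)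
        - (A_p + B * K₁ i σ)ᵀ.mulVec (S₁ i σ) - (S₂ i σ * B).mulVec (K₀ i σ))
      ht.le (hdS₁ i) ?_ ?_ (mul_nonneg (by positivity) hxb)
      (mul_nonneg (Nat.cast_nonneg _) hL0) hε₁0
    · rw [hS₁t i, norm_neg]
      exact (norm_mulVec_le' _ _).trans
        (mul_le_mul_of_nonneg_left (hx_d_bound t₁ (Set.right_mem_Icc.2 ht.le)) (by positivity))
    intro σ hσ
    have h0 := norm_sub3_le (Q.mulVec (x_d σ)) (((K₁ i σ)ᵀ * R).mulVec (K₀ i σ))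
      ((A_p + B * K₁ i σ)ᵀ.mulVec (S₁ i σ)) ((S₂ i σ * B).mulVec (K₀ i σ))
    have h1 : ‖Q.mulVec (x_d σ)‖ ≤ (n_x:ℝ)*‖Q‖*x_d_bound :=
      (norm_mulVec_le' _ _).trans
        (mul_le_mul_of_nonneg_left (hx_d_bound σ hσ) (by positivity))
    have hKR : ‖(K₁ i σ)ᵀ * R‖ ≤ M * ‖R‖ := by
      have h' := Matrix.frobenius_norm_mul (K₁ i σ)ᵀ R
      rw [Matrix.frobenius_norm_transpose] at h'
      exact h'.trans (mul_le_mul_of_nonneg_right (hK₁M i σ hσ) (norm_nonneg _))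
    have h2 : ‖((K₁ i σ)ᵀ * R).mulVec (K₀ i σ)‖ ≤ (n_u:ℝ)*(M*‖R‖)*M :=
      (norm_mulVec_le' _ _).trans
        (mul_le_mul3 le_rfl hKR (hK₀M i σ hσ) (norm_nonneg _) (norm_nonneg _)
          (by positivity) (by positivity))
    have h3 : ‖(A_p + B * K₁ i σ)ᵀ.mulVec (S₁ i σ)‖ ≤ (n_x:ℝ)*L*‖S₁ i σ‖ :=
      (norm_mulVec_le' _ _).trans
        (mul_le_mul3 le_rfl (hAKT i σ hσ) le_rfl (norm_nonneg _) (norm_nonneg _)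
          (by positivity) hL0)
    have hSB : ‖S₂ i σ * B‖ ≤ C₂ * ‖B‖ :=
      (Matrix.frobenius_norm_mul _ _).trans
        (mul_le_mul_of_nonneg_right (hS₂b i σ hσ) (norm_nonneg _))
    have h4 : ‖(S₂ i σ * B).mulVec (K₀ i σ)‖ ≤ (n_u:ℝ)*(C₂*‖B‖)*M :=
      (norm_mulVec_le' _ _).trans
        (mul_le_mul3 le_rfl hSB (hK₀M i σ hσ) (norm_nonneg _) (norm_nonneg _)
          (by positivity) (mul_nonneg hC₂0 (norm_nonneg _)))
    rw [hε₁def]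
    nlinarith [h0, h1, h2, h3, h4]
  -- difference of S₂
  have hΔ2 : ∀ σ ∈ Set.Icc t₀ t₁, ‖S₂ 0 σ - S₂ 1 σ‖ ≤ δ * D₂ := by
    have key := gronwall_backward (f := fun t => S₂ 0 t - S₂ 1 t) (δ := 0)
      (K := 2*L) (ε := e₂*δ)
      (f' := fun σ => (-Q - (K₁ 0 σ)ᵀ * R * K₁ 0 σ - S₂ 0 σ * (A_p + B * K₁ 0 σ)
          - (A_p + B * K₁ 0 σ)ᵀ * S₂ 0 σ)
        - (-Q - (K₁ 1 σ)ᵀ * R * K₁ 1 σ - S₂ 1 σ * (A_p + B * K₁ 1 σ)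
          - (A_p + B * K₁ 1 σ)ᵀ * S₂ 1 σ))
      ht.le (fun σ hσ => (hdS₂ 0 σ hσ).sub (hdS₂ 1 σ hσ))
      (by simp [hS₂t]) ?_ le_rfl (by linarith)
      (mul_nonneg he₂0 hδ0)
    · intro σ hσ
      have h := key σ hσ
      rwa [gronwallBound_zero_smul, ← hD₂def] at h
    intro σ hσ
    beta_reduce
    rw [diff2_eq']
    have h6 := norm_neg_sub_sub ((K₁ 0 σ - K₁ 1 σ)ᵀ * R * K₁ 0 σ)
      ((K₁ 1 σ)ᵀ * R * (K₁ 0 σ - K₁ 1 σ))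
      ((S₂ 0 σ - S₂ 1 σ) * (A_p + B * K₁ 0 σ)) (S₂ 1 σ * (B * (K₁ 0 σ - K₁ 1 σ)))
      ((B * (K₁ 0 σ - K₁ 1 σ))ᵀ * S₂ 0 σ) ((A_p + B * K₁ 1 σ)ᵀ * (S₂ 0 σ - S₂ 1 σ))
    have hdK := hδ₁ σ hσ
    have hBdK : ‖B * (K₁ 0 σ - K₁ 1 σ)‖ ≤ ‖B‖ * δ :=
      (Matrix.frobenius_norm_mul _ _).trans (mul_le_mul_of_nonneg_left hdK (norm_nonneg _))
    have hX1 : ‖(K₁ 0 σ - K₁ 1 σ)ᵀ * R * K₁ 0 σ‖ ≤ δ * ‖R‖ * M := by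
      have h := Matrix.frobenius_norm_mul ((K₁ 0 σ - K₁ 1 σ)ᵀ * R) (K₁ 0 σ)
      have h' := Matrix.frobenius_norm_mul (K₁ 0 σ - K₁ 1 σ)ᵀ R
      rw [Matrix.frobenius_norm_transpose] at h'
      have hKR : ‖(K₁ 0 σ - K₁ 1 σ)ᵀ * R‖ ≤ δ * ‖R‖ :=
        h'.trans (mul_le_mul_of_nonneg_right hdK (norm_nonneg R))
      exact h.trans (mul_le_mul hKR (hK₁M 0 σ hσ) (norm_nonneg _)
        (mul_nonneg hδ0 (norm_nonneg R)))
    have hX2 : ‖(K₁ 1 σ)ᵀ * R * (K₁ 0 σ - K₁ 1 σ)‖ ≤ M * ‖R‖ * δ := by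
      have h := Matrix.frobenius_norm_mul ((K₁ 1 σ)ᵀ * R) (K₁ 0 σ - K₁ 1 σ)
      have h' := Matrix.frobenius_norm_mul (K₁ 1 σ)ᵀ R
      rw [Matrix.frobenius_norm_transpose] at h'
      have hKR : ‖(K₁ 1 σ)ᵀ * R‖ ≤ M * ‖R‖ :=
        h'.trans (mul_le_mul_of_nonneg_right (hK₁M 1 σ hσ) (norm_nonneg R))
      exact h.trans (mul_le_mul hKR hdK (norm_nonneg _) (by positivity))
    have hY1 : ‖(S₂ 0 σ - S₂ 1 σ) * (A_p + B * K₁ 0 σ)‖ ≤ ‖S₂ 0 σ - S₂ 1 σ‖ * L :=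
      (Matrix.frobenius_norm_mul _ _).trans
        (mul_le_mul_of_nonneg_left (hAK 0 σ hσ) (norm_nonneg _))
    have hY2 : ‖S₂ 1 σ * (B * (K₁ 0 σ - K₁ 1 σ))‖ ≤ C₂ * (‖B‖ * δ) :=
      (Matrix.frobenius_norm_mul _ _).trans
        (mul_le_mul (hS₂b 1 σ hσ) hBdK (norm_nonneg _) hC₂0)
    have hZ1 : ‖(B * (K₁ 0 σ - K₁ 1 σ))ᵀ * S₂ 0 σ‖ ≤ (‖B‖ * δ) * C₂ := by
      have h := Matrix.frobenius_norm_mul (B * (K₁ 0 σ - K₁ 1 σ))ᵀ (S₂ 0 σ)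
      rw [Matrix.frobenius_norm_transpose] at h
      exact h.trans (mul_le_mul hBdK (hS₂b 0 σ hσ) (norm_nonneg _)
        (mul_nonneg (norm_nonneg _) hδ0))
    have hZ2 : ‖(A_p + B * K₁ 1 σ)ᵀ * (S₂ 0 σ - S₂ 1 σ)‖ ≤ L * ‖S₂ 0 σ - S₂ 1 σ‖ :=
      (Matrix.frobenius_norm_mul _ _).trans
        (mul_le_mul_of_nonneg_right (hAKT 1 σ hσ) (norm_nonneg _))
    rw [he₂def]
    nlinarith [h6, hX1, hX2, hY1, hY2, hZ1, hZ2]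
  -- difference of S₁
  have hΔ1 : ∀ σ ∈ Set.Icc t₀ t₁, ‖S₁ 0 σ - S₁ 1 σ‖ ≤ δ * D₁ := by
    have key := gronwall_backward (f := fun t => S₁ 0 t - S₁ 1 t) (δ := 0)
      (K := (n_x:ℝ)*L) (ε := e₁*δ)
      (f' := fun σ => (Q.mulVec (x_d σ) - ((K₁ 0 σ)ᵀ * R).mulVec (K₀ 0 σ)
          - (A_p + B * K₁ 0 σ)ᵀ.mulVec (S₁ 0 σ) - (S₂ 0 σ * B).mulVec (K₀ 0 σ))
        - (Q.mulVec (x_d σ) - ((K₁ 1 σ)ᵀ * R).mulVec (K₀ 1 σ)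
          - (A_p + B * K₁ 1 σ)ᵀ.mulVec (S₁ 1 σ) - (S₂ 1 σ * B).mulVec (K₀ 1 σ)))
      ht.le (fun σ hσ => (hdS₁ 0 σ hσ).sub (hdS₁ 1 σ hσ))
      (by simp [hS₁t]) ?_ le_rfl (mul_nonneg (Nat.cast_nonneg _) hL0)
      (mul_nonneg he₁0 hδ0)
    · intro σ hσ
      have h := key σ hσ
      rwa [gronwallBound_zero_smul, ← hD₁def] at h
    intro σ hσ
    beta_reduce
    rw [diff1_eq']
    have h6 := norm_neg_sub_sub (((K₁ 0 σ - K₁ 1 σ)ᵀ * R).mulVec (K₀ 0 σ))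
      (((K₁ 1 σ)ᵀ * R).mulVec (K₀ 0 σ - K₀ 1 σ))
      ((B * (K₁ 0 σ - K₁ 1 σ))ᵀ.mulVec (S₁ 0 σ))
      ((A_p + B * K₁ 1 σ)ᵀ.mulVec (S₁ 0 σ - S₁ 1 σ))
      (((S₂ 0 σ - S₂ 1 σ) * B).mulVec (K₀ 0 σ))
      ((S₂ 1 σ * B).mulVec (K₀ 0 σ - K₀ 1 σ))
    have hdK := hδ₁ σ hσ
    have hdk := hδ₀ σ hσ
    have hv1 : ‖((K₁ 0 σ - K₁ 1 σ)ᵀ * R).mulVec (K₀ 0 σ)‖ ≤ (n_u:ℝ)*(δ*‖R‖)*M := by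
      refine (norm_mulVec_le' _ _).trans
        (mul_le_mul3 le_rfl ?_ (hK₀M 0 σ hσ) (norm_nonneg _) (norm_nonneg _)
          (by positivity) (mul_nonneg hδ0 (norm_nonneg _)))
      have h' := Matrix.frobenius_norm_mul (K₁ 0 σ - K₁ 1 σ)ᵀ R
      rw [Matrix.frobenius_norm_transpose] at h'
      exact h'.trans (mul_le_mul_of_nonneg_right hdK (norm_nonneg _))
    have hv2 : ‖((K₁ 1 σ)ᵀ * R).mulVec (K₀ 0 σ - K₀ 1 σ)‖ ≤ (n_u:ℝ)*(M*‖R‖)*δ := by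
      refine (norm_mulVec_le' _ _).trans
        (mul_le_mul3 le_rfl ?_ hdk (norm_nonneg _) (norm_nonneg _)
          (by positivity) (by positivity))
      have h' := Matrix.frobenius_norm_mul (K₁ 1 σ)ᵀ R
      rw [Matrix.frobenius_norm_transpose] at h'
      exact h'.trans (mul_le_mul_of_nonneg_right (hK₁M 1 σ hσ) (norm_nonneg _))
    have hv3 : ‖(B * (K₁ 0 σ - K₁ 1 σ))ᵀ.mulVec (S₁ 0 σ)‖ ≤ (n_x:ℝ)*(‖B‖*δ)*C₁ := by
      refine (norm_mulVec_le' _ _).trans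
        (mul_le_mul3 le_rfl ?_ (hS₁b 0 σ hσ) (norm_nonneg _) (norm_nonneg _)
          (by positivity) (mul_nonneg (norm_nonneg _) hδ0))
      rw [Matrix.frobenius_norm_transpose]
      exact (Matrix.frobenius_norm_mul _ _).trans
        (mul_le_mul_of_nonneg_left hdK (norm_nonneg _))
    have hv4 : ‖(A_p + B * K₁ 1 σ)ᵀ.mulVec (S₁ 0 σ - S₁ 1 σ)‖
        ≤ (n_x:ℝ)*L*‖S₁ 0 σ - S₁ 1 σ‖ :=
      (norm_mulVec_le' _ _).trans
        (mul_le_mul3 le_rfl (hAKT 1 σ hσ) le_rfl (norm_nonneg _) (norm_nonneg _)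
          (by positivity) hL0)
    have hv5 : ‖((S₂ 0 σ - S₂ 1 σ) * B).mulVec (K₀ 0 σ)‖ ≤ (n_u:ℝ)*((δ*D₂)*‖B‖)*M := by
      refine (norm_mulVec_le' _ _).trans
        (mul_le_mul3 le_rfl ?_ (hK₀M 0 σ hσ) (norm_nonneg _) (norm_nonneg _)
          (by positivity) (mul_nonneg (mul_nonneg hδ0 hD₂0) (norm_nonneg _)))
      exact (Matrix.frobenius_norm_mul _ _).trans
        (mul_le_mul_of_nonneg_right (hΔ2 σ hσ) (norm_nonneg _))
    have hv6 : ‖(S₂ 1 σ * B).mulVec (K₀ 0 σ - K₀ 1 σ)‖ ≤ (n_u:ℝ)*(C₂*‖B‖)*δ := by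
      refine (norm_mulVec_le' _ _).trans
        (mul_le_mul3 le_rfl ?_ hdk (norm_nonneg _) (norm_nonneg _)
          (by positivity) (mul_nonneg hC₂0 (norm_nonneg _)))
      exact (Matrix.frobenius_norm_mul _ _).trans
        (mul_le_mul_of_nonneg_right (hS₂b 1 σ hσ) (norm_nonneg _))
    rw [he₁def]
    nlinarith [h6, hv1, hv2, hv3, hv4, hv5, hv6]
  -- difference of S₀
  have hΔ0 : ∀ σ ∈ Set.Icc t₀ t₁, |S₀ 0 σ - S₀ 1 σ| ≤ e₀ * δ * (t₁ - t₀) := by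
    have key := gronwall_backward (f := fun t => S₀ 0 t - S₀ 1 t) (δ := 0)
      (K := 0) (ε := e₀*δ)
      (f' := fun σ => (-(x_d σ ⬝ᵥ Q.mulVec (x_d σ)) - K₀ 0 σ ⬝ᵥ R.mulVec (K₀ 0 σ)
          - 2 * (S₁ 0 σ ⬝ᵥ B.mulVec (K₀ 0 σ)))
        - (-(x_d σ ⬝ᵥ Q.mulVec (x_d σ)) - K₀ 1 σ ⬝ᵥ R.mulVec (K₀ 1 σ)
          - 2 * (S₁ 1 σ ⬝ᵥ B.mulVec (K₀ 1 σ))))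
      ht.le (fun σ hσ => (hdS₀ 0 σ hσ).sub (hdS₀ 1 σ hσ))
      (by simp [hS₀t]) ?_ le_rfl le_rfl
      (mul_nonneg he₀0 hδ0)
    · intro σ hσ
      have h := key σ hσ
      rw [gronwallBound_K0] at h
      simp only [Real.norm_eq_abs] at h
      calc |S₀ 0 σ - S₀ 1 σ| ≤ 0 + e₀ * δ * (t₁ - t₀) := h
        _ = e₀ * δ * (t₁ - t₀) := by ring
    intro σ hσ
    beta_reduce
    rw [diff0_eq']
    have h6 := abs_comb_le ((K₀ 0 σ - K₀ 1 σ) ⬝ᵥ R.mulVec (K₀ 0 σ))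
      (K₀ 1 σ ⬝ᵥ R.mulVec (K₀ 0 σ - K₀ 1 σ))
      ((S₁ 0 σ - S₁ 1 σ) ⬝ᵥ B.mulVec (K₀ 0 σ))
      (S₁ 1 σ ⬝ᵥ B.mulVec (K₀ 0 σ - K₀ 1 σ))
    have hdk := hδ₀ σ hσ
    have hRk : ‖R.mulVec (K₀ 0 σ)‖ ≤ (n_u:ℝ)*‖R‖*M :=
      (norm_mulVec_le' _ _).trans
        (mul_le_mul_of_nonneg_left (hK₀M 0 σ hσ) (by positivity))
    have hRdk : ‖R.mulVec (K₀ 0 σ - K₀ 1 σ)‖ ≤ (n_u:ℝ)*‖R‖*δ :=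
      (norm_mulVec_le' _ _).trans (mul_le_mul_of_nonneg_left hdk (by positivity))
    have hBk : ‖B.mulVec (K₀ 0 σ)‖ ≤ (n_u:ℝ)*‖B‖*M :=
      (norm_mulVec_le' _ _).trans
        (mul_le_mul_of_nonneg_left (hK₀M 0 σ hσ) (by positivity))
    have hBdk : ‖B.mulVec (K₀ 0 σ - K₀ 1 σ)‖ ≤ (n_u:ℝ)*‖B‖*δ :=
      (norm_mulVec_le' _ _).trans (mul_le_mul_of_nonneg_left hdk (by positivity))
    have hs1 : |(K₀ 0 σ - K₀ 1 σ) ⬝ᵥ R.mulVec (K₀ 0 σ)| ≤ (n_u:ℝ)*δ*((n_u:ℝ)*‖R‖*M) :=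
      (abs_dotProduct_le' _ _).trans
        (mul_le_mul3 le_rfl hdk hRk (norm_nonneg _) (norm_nonneg _)
          (by positivity) hδ0)
    have hs2 : |K₀ 1 σ ⬝ᵥ R.mulVec (K₀ 0 σ - K₀ 1 σ)| ≤ (n_u:ℝ)*M*((n_u:ℝ)*‖R‖*δ) :=
      (abs_dotProduct_le' _ _).trans
        (mul_le_mul3 le_rfl (hK₀M 1 σ hσ) hRdk (norm_nonneg _) (norm_nonneg _)
          (by positivity) hM.le)
    have hs3 : |(S₁ 0 σ - S₁ 1 σ) ⬝ᵥ B.mulVec (K₀ 0 σ)| ≤ (n_x:ℝ)*(δ*D₁)*((n_u:ℝ)*‖B‖*M) :=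
      (abs_dotProduct_le' _ _).trans
        (mul_le_mul3 le_rfl (hΔ1 σ hσ) hBk (norm_nonneg _) (norm_nonneg _)
          (by positivity) (mul_nonneg hδ0 hD₁0))
    have hs4 : |S₁ 1 σ ⬝ᵥ B.mulVec (K₀ 0 σ - K₀ 1 σ)| ≤ (n_x:ℝ)*C₁*((n_u:ℝ)*‖B‖*δ) :=
      (abs_dotProduct_le' _ _).trans
        (mul_le_mul3 le_rfl (hS₁b 1 σ hσ) hBdk (norm_nonneg _) (norm_nonneg _)
          (by positivity) hC₁0)
    rw [Real.norm_eq_abs, he₀def]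
    have hf : (0:ℝ) ≤ ‖S₀ 0 σ - S₀ 1 σ‖ := norm_nonneg _
    nlinarith [h6, hs1, hs2, hs3, hs4]
  -- assembly
  intro τ hτ x hx
  have hP := hΔ2 τ hτ
  have hq := hΔ1 τ hτ
  have hr := hΔ0 τ hτ
  have hX : (x ⬝ᵥ (S₂ 0 τ).mulVec x + 2 * (x ⬝ᵥ S₁ 0 τ) + S₀ 0 τ)
      - (x ⬝ᵥ (S₂ 1 τ).mulVec x + 2 * (x ⬝ᵥ S₁ 1 τ) + S₀ 1 τ)
      = x ⬝ᵥ (S₂ 0 τ - S₂ 1 τ).mulVec x + 2 * (x ⬝ᵥ (S₁ 0 τ - S₁ 1 τ))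
        + (S₀ 0 τ - S₀ 1 τ) := by
    simp only [Matrix.sub_mulVec, dotProduct_sub]
    ring
  rw [hX]
  have hmv : ‖(S₂ 0 τ - S₂ 1 τ).mulVec x‖ ≤ (n_x:ℝ)*(δ*D₂)*ρ :=
    (norm_mulVec_le' _ _).trans
      (mul_le_mul3 le_rfl hP hx (norm_nonneg _) (norm_nonneg _)
        (by positivity) (mul_nonneg hδ0 hD₂0))
  have b1 : |x ⬝ᵥ (S₂ 0 τ - S₂ 1 τ).mulVec x| ≤ (n_x:ℝ)*ρ*((n_x:ℝ)*(δ*D₂)*ρ) :=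
    (abs_dotProduct_le' _ _).trans
      (mul_le_mul3 le_rfl hx hmv (norm_nonneg _) (norm_nonneg _)
        (by positivity) hρ.le)
  have b2 : |x ⬝ᵥ (S₁ 0 τ - S₁ 1 τ)| ≤ (n_x:ℝ)*ρ*(δ*D₁) :=
    (abs_dotProduct_le' _ _).trans
      (mul_le_mul3 le_rfl hx hq (norm_nonneg _) (norm_nonneg _)
        (by positivity) hρ.le)
  have htri : |x ⬝ᵥ (S₂ 0 τ - S₂ 1 τ).mulVec x + 2 * (x ⬝ᵥ (S₁ 0 τ - S₁ 1 τ))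
      + (S₀ 0 τ - S₀ 1 τ)|
      ≤ |x ⬝ᵥ (S₂ 0 τ - S₂ 1 τ).mulVec x| + 2 * |x ⬝ᵥ (S₁ 0 τ - S₁ 1 τ)|
        + |S₀ 0 τ - S₀ 1 τ| := by
    set a := x ⬝ᵥ (S₂ 0 τ - S₂ 1 τ).mulVec x
    set b := x ⬝ᵥ (S₁ 0 τ - S₁ 1 τ)
    set c := S₀ 0 τ - S₀ 1 τ
    calc |a + 2*b + c| ≤ |a + 2*b| + |c| := abs_add_le _ _
      _ ≤ |a| + |2*b| + |c| := by linarith [abs_add_le a (2*b)]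
      _ = |a| + 2*|b| + |c| := by rw [abs_mul]; norm_num
  nlinarith [htri, b1, b2, hr]
end

section
/- Let Φ : [t₀,∞) → ℝ^m be bounded and differentiable with bounded derivative ‖Φ̇(t)‖ ≤ M for all t. Then the following two properties are equivalent: (1) there exist T > 0 and α > 0 such that ∫_t^{t+T} Φ(τ)Φ(τ)ᵀ dτ ⪰ αI for all t ≥ t₀; (2) there exist ε > 0, T > 0 and δ₀ > 0 such that for every t ≥ t₀ and every unit vector ω ∈ ℝ^m there exists t₂ with [t₂, t₂+δ₀] ⊆ [t, t+T] and (1/T)·|∫_{t₂}^{t₂+δ₀} Φ(τ)ᵀω dτ| ≥ ε. -/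
open scoped Matrix

/-- The Euclidean (`ℓ²`) norm of a vector in `ℝⁿ`. -/
noncomputable def euclNorm {n : ℕ} (u : Fin n → ℝ) : ℝ :=
  ‖(WithLp.equiv 2 (Fin n → ℝ)).symm u‖

lemma euclNorm_nonneg {n : ℕ} (u : Fin n → ℝ) : 0 ≤ euclNorm u := norm_nonneg _

lemma abs_dot_le {n : ℕ} (u v : Fin n → ℝ) : |u ⬝ᵥ v| ≤ euclNorm u * euclNorm v := by
  have := abs_real_inner_le_norm ((WithLp.equiv 2 (Fin n → ℝ)).symm u)
    ((WithLp.equiv 2 (Fin n → ℝ)).symm v)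
  simpa [euclNorm, PiLp.inner_apply, dotProduct, RCLike.inner_apply, mul_comm] using this

lemma dot_self_eq {n : ℕ} (x : Fin n → ℝ) : x ⬝ᵥ x = euclNorm x ^ 2 := by
  have := real_inner_self_eq_norm_sq ((WithLp.equiv 2 (Fin n → ℝ)).symm x)
  rw [euclNorm, ← this, PiLp.inner_apply]; simp [dotProduct, RCLike.inner_apply, sq]

lemma euclNorm_smul {n : ℕ} (c : ℝ) (x : Fin n → ℝ) :
    euclNorm (c • x) = |c| * euclNorm x := by
  unfold euclNorm
  rw [show (WithLp.equiv 2 (Fin n → ℝ)).symm (c • x)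
      = c • (WithLp.equiv 2 (Fin n → ℝ)).symm x from rfl]
  rw [norm_smul, Real.norm_eq_abs]

lemma euclNorm_eq_zero {n : ℕ} {x : Fin n → ℝ} (h : euclNorm x = 0) : x = 0 := by
  unfold euclNorm at h
  have := norm_eq_zero.mp h
  have h2 : x = WithLp.equiv 2 (Fin n → ℝ) ((WithLp.equiv 2 (Fin n → ℝ)).symm x) :=
    (Equiv.apply_symm_apply _ _).symm
  rw [h2, this]; rfl

lemma hasDerivAt_dot {m : ℕ} {Φ Φ' : ℝ → Fin m → ℝ} (hderiv : ∀ t, HasDerivAt Φ (Φ' t) t)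
    (ω : Fin m → ℝ) (t : ℝ) : HasDerivAt (fun s => Φ s ⬝ᵥ ω) (Φ' t ⬝ᵥ ω) t := by
  have h := hasDerivAt_pi.1 (hderiv t)
  simpa [dotProduct] using HasDerivAt.fun_sum (fun i (_ : i ∈ Finset.univ) => (h i).mul_const (ω i))

lemma quadform_eq {m : ℕ} (Φ : ℝ → Fin m → ℝ) (hc : ∀ i, Continuous fun s => Φ s i)
    (x : Fin m → ℝ) (a b : ℝ) :
    x ⬝ᵥ ((Matrix.of fun i j => ∫ τ in a..b, Φ τ i * Φ τ j) *ᵥ x)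
      = ∫ τ in a..b, (Φ τ ⬝ᵥ x) ^ 2 := by
  have hint : ∀ i j : Fin m, IntervalIntegrable (fun τ => Φ τ i * Φ τ j * x j) MeasureTheory.volume a b :=
    fun i j => (((hc i).mul (hc j)).mul continuous_const).intervalIntegrable a b
  have hmv : ∀ i, ((Matrix.of fun i j => ∫ τ in a..b, Φ τ i * Φ τ j) *ᵥ x) i
      = ∫ τ in a..b, Φ τ i * (Φ τ ⬝ᵥ x) := by
    intro i
    rw [Matrix.mulVec, dotProduct]
    rw [show (∑ j, (Matrix.of fun i j => ∫ τ in a..b, Φ τ i * Φ τ j) i j * x j)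
        = ∑ j, ∫ τ in a..b, Φ τ i * Φ τ j * x j by
      refine Finset.sum_congr rfl fun j _ => ?_
      simp [intervalIntegral.integral_mul_const]]
    rw [← intervalIntegral.integral_finset_sum (fun j _ => hint i j)]
    congr 1; ext τ; simp [dotProduct, Finset.mul_sum, mul_assoc]
  have hdotc : Continuous fun τ => Φ τ ⬝ᵥ x := by
    simp only [dotProduct]
    exact continuous_finset_sum _ (fun i _ => (hc i).mul continuous_const)
  rw [dotProduct]
  rw [show (∑ i, x i * ((Matrix.of fun i j => ∫ τ in a..b, Φ τ i * Φ τ j) *ᵥ x) i)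
      = ∑ i, ∫ τ in a..b, x i * (Φ τ i * (Φ τ ⬝ᵥ x)) by
    refine Finset.sum_congr rfl fun i _ => ?_
    rw [hmv i, ← intervalIntegral.integral_const_mul]]
  rw [← intervalIntegral.integral_finset_sum (f := fun i τ => x i * (Φ τ i * (Φ τ ⬝ᵥ x))) (fun i _ =>
    ((continuous_const.mul ((hc i).mul hdotc)).intervalIntegrable a b))]
  congr 1; ext τ
  simp only [dotProduct]
  rw [sq, Finset.sum_mul]
  refine Finset.sum_congr rfl fun i _ => by ring

lemma integral_cs (h : ℝ → ℝ) (hc : Continuous h) (a δ : ℝ) (hδ : 0 < δ) :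
    (∫ s in a..a + δ, h s) ^ 2 ≤ δ * ∫ s in a..a + δ, (h s) ^ 2 := by
  set I := ∫ s in a..a + δ, h s with hI
  set J := ∫ s in a..a + δ, (h s) ^ 2 with hJ
  have h1 : IntervalIntegrable h MeasureTheory.volume a (a + δ) := hc.intervalIntegrable _ _
  have h2 : IntervalIntegrable (fun s => (h s)^2) MeasureTheory.volume a (a + δ) :=
    (hc.pow 2).intervalIntegrable _ _
  have h0 : 0 ≤ ∫ s in a..a + δ, (δ * h s - I) ^ 2 :=
    intervalIntegral.integral_nonneg (by linarith) (fun s _ => sq_nonneg _)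
  have hexp : (∫ s in a..a + δ, (δ * h s - I) ^ 2)
      = δ ^ 2 * J - 2 * δ * I * I + I ^ 2 * δ := by
    have : (fun s => (δ * h s - I) ^ 2)
        = fun s => δ ^ 2 * (h s) ^ 2 - 2 * δ * I * h s + I ^ 2 := by
      ext s; ring
    rw [this]
    rw [intervalIntegral.integral_add (((h2.const_mul _).sub (h1.const_mul _)))
      (intervalIntegrable_const),
      intervalIntegral.integral_sub (h2.const_mul _) (h1.const_mul _),
      intervalIntegral.integral_const_mul, intervalIntegral.integral_const_mul,
      intervalIntegral.integral_const]
    simp [← hI, ← hJ]; ring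
  nlinarith [hexp ▸ h0]

lemma herm_aux {m : ℕ} (Φ : ℝ → Fin m → ℝ) (α a b : ℝ) :
    (Matrix.of (fun i j => ∫ τ in a..b, Φ τ i * Φ τ j)
      - α • (1 : Matrix (Fin m) (Fin m) ℝ)).IsHermitian := by
  apply Matrix.IsHermitian.sub
  · show _ = _
    ext i j
    simp only [Matrix.conjTranspose_apply, Matrix.of_apply, star_trivial]
    congr 1; ext τ; ring
  · show _ = _
    simp [Matrix.conjTranspose_smul]

/-- (equivalence of the two definitions of persistent excitation)
For a bounded differentiable `Φ : [t₀,∞) → ℝ^m` with bounded derivative, the matrix form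
of persistent excitation (`∫_t^{t+T} ΦΦᵀ ⪰ αI` for all `t ≥ t₀`) is equivalent to the
interval-averaged directional condition of Definition 2. -/
theorem persistent_excitation_defs_equivalent
    {m : ℕ} (t₀ : ℝ) (Φ Φ' : ℝ → Fin m → ℝ)
    (hderiv : ∀ t, HasDerivAt Φ (Φ' t) t)
    (C : ℝ) (hbdd : ∀ t ∈ Set.Ici t₀, euclNorm (Φ t) ≤ C)
    (M : ℝ) (hderivbdd : ∀ t ∈ Set.Ici t₀, euclNorm (Φ' t) ≤ M) :
    (∃ T > (0 : ℝ), ∃ α > (0 : ℝ), ∀ t ∈ Set.Ici t₀,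
        (Matrix.of (fun i j => ∫ τ in t..(t + T), Φ τ i * Φ τ j)
          - α • (1 : Matrix (Fin m) (Fin m) ℝ)).PosSemidef) ↔
      (∃ ε > (0 : ℝ), ∃ T > (0 : ℝ), ∃ δ₀ > (0 : ℝ), ∀ t ∈ Set.Ici t₀,
        ∀ ω : Fin m → ℝ, euclNorm ω = 1 →
          ∃ t₂, t ≤ t₂ ∧ t₂ + δ₀ ≤ t + T ∧
            ε ≤ (1 / T) * |∫ τ in t₂..(t₂ + δ₀), Φ τ ⬝ᵥ ω|) := by
  have hc : ∀ i, Continuous fun s => Φ s i :=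
    fun i => continuous_iff_continuousAt.2 fun s => ((hasDerivAt_pi.1 (hderiv s)) i).continuousAt
  have hdotc : ∀ ω : Fin m → ℝ, Continuous fun s => Φ s ⬝ᵥ ω := by
    intro ω
    simp only [dotProduct]
    exact continuous_finset_sum _ (fun i _ => (hc i).mul continuous_const)
  have hM0 : 0 ≤ M := le_trans (euclNorm_nonneg _) (hderivbdd t₀ (Set.mem_Ici.2 le_rfl))
  constructor
  · -- (1) → (2)
    rintro ⟨T, hT, α, hα, hPE⟩
    set c : ℝ := Real.sqrt (α / T) with hc_def
    have hcpos : 0 < c := Real.sqrt_pos.2 (div_pos hα hT)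
    set δ₀ : ℝ := min T (c / (2 * (M + 1))) with hδ_def
    have hδpos : 0 < δ₀ := lt_min hT (by positivity)
    have hδT : δ₀ ≤ T := min_le_left _ _
    have hδM : δ₀ ≤ c / (2 * (M + 1)) := min_le_right _ _
    have hMδ : M * δ₀ ≤ c / 2 := by
      have h1 : M * δ₀ ≤ M * (c / (2 * (M + 1))) := by
        apply mul_le_mul_of_nonneg_left hδM hM0
      have h2 : M * (c / (2 * (M + 1))) ≤ c / 2 := by
        rw [mul_div_assoc', div_le_div_iff₀ (by positivity) (by norm_num : (0:ℝ) < 2)]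
        nlinarith [hcpos.le]
      linarith
    refine ⟨c * δ₀ / (2 * T), by positivity, T, hT, δ₀, hδpos, ?_⟩
    intro t ht ω hω
    set g : ℝ → ℝ := fun s => Φ s ⬝ᵥ ω with hg_def
    have hgc : Continuous g := hdotc ω
    -- from PE: ∫ g² ≥ α
    have hquad := (hPE t ht).dotProduct_mulVec_nonneg ω
    rw [Matrix.sub_mulVec, dotProduct_sub, Matrix.smul_mulVec,
      Matrix.one_mulVec, star_trivial, quadform_eq Φ hc ω t (t + T)] at hquad
    have hωω : ω ⬝ᵥ (α • ω) = α := by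
      rw [dotProduct_smul, smul_eq_mul, dot_self_eq, hω]; ring
    rw [hωω] at hquad
    have hJ : α ≤ ∫ s in t..t + T, g s ^ 2 := by linarith
    -- max attained
    obtain ⟨τs, hτmem, hmax⟩ := (isCompact_Icc (a := t) (b := t + T)).exists_isMaxOn
      (Set.nonempty_Icc.2 (by linarith)) ((hgc.pow 2).continuousOn)
    have hle : (∫ s in t..t + T, g s ^ 2) ≤ g τs ^ 2 * T := by
      have h := intervalIntegral.integral_mono_on (μ := MeasureTheory.volume)
        (by linarith : t ≤ t + T)
        ((hgc.pow 2).intervalIntegrable _ _) intervalIntegrable_const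
        (fun s hs => hmax hs)
      simp only [intervalIntegral.integral_const, smul_eq_mul, add_sub_cancel_left, Pi.pow_apply] at h
      linarith
    have hgτ : c ≤ |g τs| := by
      have h1 : α / T ≤ g τs ^ 2 := by
        rw [div_le_iff₀ hT]; linarith
      have := Real.sqrt_le_sqrt h1
      rwa [Real.sqrt_sq_eq_abs] at this
    set t₂ : ℝ := min τs (t + T - δ₀) with ht₂_def
    have ht₂ge : t ≤ t₂ := le_min hτmem.1 (by linarith)
    have ht₂le : t₂ + δ₀ ≤ t + T := by
      have := min_le_right τs (t + T - δ₀); linarith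
    have hτub : τs ≤ t₂ + δ₀ := by
      rcases min_cases τs (t + T - δ₀) with ⟨h, _⟩ | ⟨h, hle2⟩
      · rw [ht₂_def, h]; linarith
      · rw [ht₂_def, h]; linarith [hτmem.2]
    have ht₂τ : t₂ ≤ τs := min_le_left _ _
    -- derivative bound on Icc t (t+T)
    have hbound : ∀ y ∈ Set.Icc t (t + T), ‖Φ' y ⬝ᵥ ω‖ ≤ M := by
      intro y hy
      rw [Real.norm_eq_abs]
      calc |Φ' y ⬝ᵥ ω| ≤ euclNorm (Φ' y) * euclNorm ω := abs_dot_le _ _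
        _ = euclNorm (Φ' y) := by rw [hω, mul_one]
        _ ≤ M := hderivbdd y (le_trans ht hy.1)
    have hlip : ∀ x ∈ Set.Icc t (t + T), ∀ y ∈ Set.Icc t (t + T),
        |g y - g x| ≤ M * |y - x| := by
      intro x hx y hy
      have := (convex_Icc t (t + T)).norm_image_sub_le_of_norm_hasDerivWithin_le
        (f := g) (f' := fun s => Φ' s ⬝ᵥ ω)
        (fun s _ => (hasDerivAt_dot hderiv ω s).hasDerivWithinAt) hbound hx hy
      simpa [Real.norm_eq_abs] using this
    have hsub : Set.Icc t₂ (t₂ + δ₀) ⊆ Set.Icc t (t + T) :=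
      Set.Icc_subset_Icc ht₂ge ht₂le
    have hclose : ∀ s ∈ Set.Icc t₂ (t₂ + δ₀), |g s - g τs| ≤ c / 2 := by
      intro s hs
      have h1 : |s - τs| ≤ δ₀ := by
        rw [abs_sub_le_iff]
        constructor <;> [skip; skip] <;>
          · rcases hs with ⟨hs1, hs2⟩; first | linarith | linarith
      calc |g s - g τs| ≤ M * |s - τs| := hlip τs hτmem s (hsub hs)
        _ ≤ M * δ₀ := by apply mul_le_mul_of_nonneg_left h1 hM0
        _ ≤ c / 2 := hMδ
    refine ⟨t₂, ht₂ge, ht₂le, ?_⟩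
    have hintg : IntervalIntegrable g MeasureTheory.volume t₂ (t₂ + δ₀) :=
      hgc.intervalIntegrable _ _
    rcases le_or_gt c (g τs) with hpos | hrest
    · -- g ≥ c/2 on interval
      have hlb : ∀ s ∈ Set.Icc t₂ (t₂ + δ₀), c / 2 ≤ g s := by
        intro s hs
        have := hclose s hs
        have := abs_le.1 this
        linarith [this.1]
      have hint : c / 2 * δ₀ ≤ ∫ s in t₂..t₂ + δ₀, g s := by
        have h := intervalIntegral.integral_mono_on (μ := MeasureTheory.volume)
          (by linarith : t₂ ≤ t₂ + δ₀) intervalIntegrable_const hintg hlb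
        simp only [intervalIntegral.integral_const, smul_eq_mul, add_sub_cancel_left] at h
        linarith
      have habs : c / 2 * δ₀ ≤ |∫ s in t₂..t₂ + δ₀, g s| :=
        le_trans hint (le_abs_self _)
      calc c * δ₀ / (2 * T) = (1 / T) * (c / 2 * δ₀) := by ring
        _ ≤ (1 / T) * |∫ s in t₂..t₂ + δ₀, g s| :=
            mul_le_mul_of_nonneg_left habs (by positivity)
    · -- |g τs| = -(g τs), g ≤ -c/2
      have hneg : g τs ≤ -c := by
        rcases abs_cases (g τs) with ⟨h1, _⟩ | ⟨h1, _⟩ <;> rw [h1] at hgτ <;> linarith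
      have hub : ∀ s ∈ Set.Icc t₂ (t₂ + δ₀), g s ≤ -(c / 2) := by
        intro s hs
        have := abs_le.1 (hclose s hs)
        linarith [this.2]
      have hint : (∫ s in t₂..t₂ + δ₀, g s) ≤ -(c / 2) * δ₀ := by
        have h := intervalIntegral.integral_mono_on (μ := MeasureTheory.volume)
          (by linarith : t₂ ≤ t₂ + δ₀) hintg intervalIntegrable_const hub
        simp only [intervalIntegral.integral_const, smul_eq_mul, add_sub_cancel_left] at h
        linarith
      have habs : c / 2 * δ₀ ≤ |∫ s in t₂..t₂ + δ₀, g s| := by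
        have h3 : c / 2 * δ₀ ≤ -(∫ s in t₂..t₂ + δ₀, g s) := by linarith
        exact h3.trans (neg_le_abs _)
      calc c * δ₀ / (2 * T) = (1 / T) * (c / 2 * δ₀) := by ring
        _ ≤ (1 / T) * |∫ s in t₂..t₂ + δ₀, g s| :=
            mul_le_mul_of_nonneg_left habs (by positivity)
  · -- (2) → (1)
    rintro ⟨ε, hε, T, hT, δ₀, hδ, h2⟩
    refine ⟨T, hT, ε ^ 2 * T ^ 2 / δ₀, by positivity, fun t ht => ?_⟩
    refine Matrix.PosSemidef.of_dotProduct_mulVec_nonneg (herm_aux Φ _ t (t + T)) fun x => ?_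
    rw [star_trivial, Matrix.sub_mulVec, dotProduct_sub, Matrix.smul_mulVec,
      Matrix.one_mulVec, quadform_eq Φ hc x t (t + T), dotProduct_smul, smul_eq_mul,
      dot_self_eq]
    rcases eq_or_ne x 0 with rfl | hx
    · simp [euclNorm]
    · have hN : 0 < euclNorm x := by
        rcases lt_or_eq_of_le (euclNorm_nonneg x) with h | h
        · exact h
        · exact absurd (euclNorm_eq_zero h.symm) hx
      set N := euclNorm x with hN_def
      set ω : Fin m → ℝ := N⁻¹ • x with hω_def
      have hωnorm : euclNorm ω = 1 := by
        rw [hω_def, euclNorm_smul, abs_of_pos (inv_pos.2 hN), inv_mul_cancel₀ hN.ne']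
      obtain ⟨t₂, ht₂, ht₂T, hεb⟩ := h2 t ht ω hωnorm
      have hδT : δ₀ ≤ T := by linarith
      set I := ∫ τ in t₂..t₂ + δ₀, Φ τ ⬝ᵥ ω with hI_def
      have hIlb : ε * T ≤ |I| := by
        have := hεb
        rw [one_div, ← div_eq_inv_mul, le_div_iff₀ hT] at this
        linarith [this]
      have hcs : I ^ 2 ≤ δ₀ * ∫ s in t₂..t₂ + δ₀, (Φ s ⬝ᵥ ω) ^ 2 :=
        integral_cs _ (hdotc ω) t₂ δ₀ hδ
      have hsq : ε ^ 2 * T ^ 2 ≤ I ^ 2 := by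
        have h1 : 0 ≤ ε * T := by positivity
        nlinarith [abs_nonneg I, sq_abs I]
      have hJ1 : ε ^ 2 * T ^ 2 / δ₀ ≤ ∫ s in t₂..t₂ + δ₀, (Φ s ⬝ᵥ ω) ^ 2 := by
        rw [div_le_iff₀ hδ]
        nlinarith
      have hmono : (∫ s in t₂..t₂ + δ₀, (Φ s ⬝ᵥ ω) ^ 2) ≤ ∫ s in t..t + T, (Φ s ⬝ᵥ ω) ^ 2 := by
        apply intervalIntegral.integral_mono_interval ht₂ (by linarith) ht₂T
        · filter_upwards with s using sq_nonneg _
        · exact ((hdotc ω).pow 2).intervalIntegrable _ _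
      have hscale : (∫ s in t..t + T, (Φ s ⬝ᵥ x) ^ 2)
          = N ^ 2 * ∫ s in t..t + T, (Φ s ⬝ᵥ ω) ^ 2 := by
        rw [← intervalIntegral.integral_const_mul]
        congr 1; ext s
        rw [hω_def, dotProduct_smul, smul_eq_mul]
        field_simp
      rw [hscale]
      have : ε ^ 2 * T ^ 2 / δ₀ ≤ ∫ s in t..t + T, (Φ s ⬝ᵥ ω) ^ 2 := by linarith
      nlinarith [sq_nonneg N, hN]
end
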